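/- arXiv:2112.02421 — 3 statements merged into one kernel-verified Lean document; each statement's English description precedes it below -/
import Mathlib

section
/- For any positive integer k and any M > 0, there exist two Borel probability distributions P_1, P_2 supported in [0, M] such that ∫ θ^j dP_1(θ) = ∫ θ^j dP_2(θ) for all j = 1, …, k, and W_1(P_1, P_2) ≥ M / (2k). -/
open MeasureTheory Finset
open scoped fwdDiff

-- iterated forward difference of a monomial of degree < n vanishes
lemma fwdDiff_pow_eq_zero (h : ℝ) :
    ∀ j : ℕ, ∀ n : ℕ, j < n → (fwdDiff h)^[n] (fun x : ℝ => x ^ j) = 0 := by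
  intro j
  induction j using Nat.strong_induction_on with
  | _ j IH =>
    intro n hjn
    obtain ⟨m, rfl⟩ : ∃ m, n = m + 1 := ⟨n - 1, (Nat.succ_pred_eq_of_pos (Nat.pos_of_ne_zero (by omega))).symm⟩
    rw [Function.iterate_succ_apply]
    have hdiff : fwdDiff h (fun x : ℝ => x ^ j)
        = ∑ i ∈ range j, (j.choose i * h ^ (j - i)) • (fun x : ℝ => x ^ i) := by
      funext x
      simp only [fwdDiff, Finset.sum_apply, Pi.smul_apply, smul_eq_mul]
      rw [add_pow, Finset.sum_range_succ]
      simp only [Nat.choose_self, Nat.cast_one, Nat.sub_self, pow_zero, mul_one, one_mul,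
        add_sub_cancel_right]
      exact Finset.sum_congr rfl fun i _ => by ring
    rw [hdiff, fwdDiff_iter_finset_sum]
    refine Finset.sum_eq_zero fun i hi => ?_
    rw [fwdDiff_iter_const_smul, IH i (Finset.mem_range.mp hi) m
      (lt_of_lt_of_le (Finset.mem_range.mp hi) (Nat.lt_succ_iff.mp hjn)), smul_zero]

lemma integrable_dirac'' (f : ℝ → ℝ) (a : ℝ) : Integrable f (Measure.dirac a) := by
  have hae : f =ᵐ[Measure.dirac a] fun _ => f a := by
    rw [MeasureTheory.ae_dirac_eq]
    exact Filter.eventually_pure.mpr rfl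
  exact (integrable_const (f a)).congr hae.symm

lemma integral_dirac_comb (s : Finset ℕ) (w : ℕ → ℝ) (hw : ∀ i, 0 ≤ w i)
    (x : ℕ → ℝ) (f : ℝ → ℝ) :
    ∫ t, f t ∂(∑ i ∈ s, ENNReal.ofReal (w i) • Measure.dirac (x i))
      = ∑ i ∈ s, w i * f (x i) := by
  rw [integral_finset_sum_measure (fun i _ =>
    (integrable_dirac'' f (x i)).smul_measure ENNReal.ofReal_ne_top)]
  refine Finset.sum_congr rfl fun i _ => ?_
  rw [integral_smul_measure, integral_dirac, ENNReal.toReal_ofReal (hw i), smul_eq_mul]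

-- splitting an alternating sum into even/odd parts
lemma alt_split (n : ℕ) (g : ℕ → ℝ) :
    ∑ i ∈ Finset.range (n + 1), (-1 : ℝ) ^ i * g i
      = ∑ i ∈ (Finset.range (n + 1)).filter (fun i => Even i), g i
        - ∑ i ∈ (Finset.range (n + 1)).filter (fun i => ¬ Even i), g i := by
  rw [← Finset.sum_filter_add_sum_filter_not (Finset.range (n + 1)) (fun i => Even i)
    (fun i => (-1 : ℝ) ^ i * g i)]
  rw [sub_eq_add_neg, ← Finset.sum_neg_distrib]
  congr 1
  · exact Finset.sum_congr rfl fun i hi =>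
      by rw [(Finset.mem_filter.mp hi).2.neg_one_pow, one_mul]
  · exact Finset.sum_congr rfl fun i hi => by
      rw [(Nat.not_even_iff_odd.mp (Finset.mem_filter.mp hi).2).neg_one_pow]; ring

lemma even_choose_sum (n : ℕ) (hn : n ≠ 0) :
    ∑ i ∈ (Finset.range (n + 1)).filter (fun i => Even i), ((n.choose i : ℝ))
      = 2 ^ (n - 1) ∧
    ∑ i ∈ (Finset.range (n + 1)).filter (fun i => ¬ Even i), ((n.choose i : ℝ))
      = 2 ^ (n - 1) := by
  set E := ∑ i ∈ (Finset.range (n + 1)).filter (fun i => Even i), ((n.choose i : ℝ))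
  set O := ∑ i ∈ (Finset.range (n + 1)).filter (fun i => ¬ Even i), ((n.choose i : ℝ))
  have h1 : E + O = 2 ^ n := by
    rw [Finset.sum_filter_add_sum_filter_not]
    rw [← Nat.cast_sum, Nat.sum_range_choose]
    push_cast; ring
  have h2 : E - O = 0 := by
    rw [← alt_split n (fun i => (n.choose i : ℝ))]
    have := Int.alternating_sum_range_choose_of_ne hn
    have : ((∑ i ∈ Finset.range (n + 1), ((-1) ^ i * n.choose i : ℤ) : ℤ) : ℝ) = 0 := by
      rw [this]; norm_num
    rw [← this]
    push_cast; ring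
  have h2n : (2 : ℝ) ^ n = 2 * 2 ^ (n - 1) := by
    rw [← pow_succ']
    congr 1
    omega
  constructor <;> linarith [h1, h2]

lemma moment_alt_zero (h : ℝ) (n j : ℕ) (hjn : j < n) (hne : Even n) :
    ∑ i ∈ Finset.range (n + 1), (-1 : ℝ) ^ i * (n.choose i : ℝ) * ((i : ℝ) * h) ^ j = 0 := by
  have key := fwdDiff_iter_eq_sum_shift h (fun x : ℝ => x ^ j) n 0
  rw [fwdDiff_pow_eq_zero h j n hjn] at key
  simp only [Pi.zero_apply, zero_add, nsmul_eq_mul, zsmul_eq_mul] at key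
  rw [eq_comm]
  refine key.trans (Finset.sum_congr rfl fun i hi => ?_)
  have hile : i ≤ n := Nat.lt_succ_iff.mp (Finset.mem_range.mp hi)
  have hpar : (-1 : ℝ) ^ (n - i) = (-1 : ℝ) ^ i := by
    rcases Nat.even_or_odd i with hie | hio
    · rw [hie.neg_one_pow, ((Nat.even_sub hile).mpr (by simp [hne, hie])).neg_one_pow]
    · rw [hio.neg_one_pow, ((Nat.odd_sub hile).mpr
        (iff_of_false (Nat.not_odd_iff_even.mpr hne) (Nat.not_even_iff_odd.mpr hio))).neg_one_pow]
  push_cast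
  rw [hpar]

lemma grid_even (h : ℝ) (t : ℤ) :
    Metric.infDist (2 * h * (t : ℝ)) (Set.range fun m : ℤ => 2 * h * (m : ℝ)) = 0 :=
  Metric.infDist_zero_of_mem ⟨t, rfl⟩

lemma grid_odd (h : ℝ) (hh : 0 < h) (t : ℤ) :
    Metric.infDist (2 * h * (t : ℝ) + h) (Set.range fun m : ℤ => 2 * h * (m : ℝ)) = h := by
  refine le_antisymm ?_ ?_
  · calc Metric.infDist (2 * h * (t : ℝ) + h) _
        ≤ dist (2 * h * (t : ℝ) + h) (2 * h * (t : ℝ)) :=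
          Metric.infDist_le_dist_of_mem (Set.mem_range_self t)
      _ = h := by rw [Real.dist_eq]; simp [abs_of_pos hh]
  · by_contra hlt
    push_neg at hlt
    obtain ⟨y, ⟨m, rfl⟩, hy⟩ :=
      (Metric.infDist_lt_iff ⟨_, Set.mem_range_self (0:ℤ)⟩).mp hlt
    rw [Real.dist_eq] at hy
    have habs : |2 * h * (t : ℝ) + h - 2 * h * (m : ℝ)| = |h| * |((2 * (t - m) + 1 : ℤ) : ℝ)| := by
      rw [← abs_mul]
      congr 1
      push_cast
      ring
    have hge : (1 : ℝ) ≤ |((2 * (t - m) + 1 : ℤ) : ℝ)| := by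
      rw [← Int.cast_abs]
      exact_mod_cast Int.one_le_abs (by omega)
    rw [habs, abs_of_pos hh] at hy
    nlinarith

noncomputable section

/-- The Wasserstein-1 distance between two measures on `ℝ`, defined through the
Kantorovich–Rubinstein dual formula as the supremum of `∫ ℓ d(μ - ν)` over all
1-Lipschitz functions `ℓ`. -/
def W1 (μ ν : Measure ℝ) : ℝ :=
  ⨆ ℓ : {f : ℝ → ℝ // LipschitzWith 1 f}, (∫ x, ℓ.1 x ∂μ - ∫ x, ℓ.1 x ∂ν)

/-- Proposition 1: moment-matching construction.  For every
positive integer `k` and every `M > 0` there are Borel probability measures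
`P₁, P₂` supported in `[0, M]` whose first `k` moments coincide and with
`W₁(P₁, P₂) ≥ M / (2k)`. -/
theorem stmt_9 (k : ℕ) (hk : 1 ≤ k) (M : ℝ) (hM : 0 < M) :
    ∃ P₁ P₂ : Measure ℝ,
      IsProbabilityMeasure P₁ ∧ IsProbabilityMeasure P₂ ∧
      P₁ (Set.Icc 0 M)ᶜ = 0 ∧ P₂ (Set.Icc 0 M)ᶜ = 0 ∧
      (∀ j : ℕ, 1 ≤ j → j ≤ k → (∫ θ, θ ^ j ∂P₁) = ∫ θ, θ ^ j ∂P₂) ∧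
      M / (2 * k) ≤ W1 P₁ P₂ := by
  set n : ℕ := 2 * k with hn
  have hn0 : n ≠ 0 := by omega
  have hk0 : (0 : ℝ) < (k : ℝ) := by exact_mod_cast hk
  set h : ℝ := M / (2 * k) with hhdef
  have hh : 0 < h := div_pos hM (by positivity)
  set w : ℕ → ℝ := fun i => (n.choose i : ℝ) / 2 ^ (n - 1) with hwdef
  have hw : ∀ i, 0 ≤ w i := fun i => by positivity
  set x : ℕ → ℝ := fun i => (i : ℝ) * h with hxdef
  set sE := (Finset.range (n + 1)).filter (fun i => Even i) with hsE
  set sO := (Finset.range (n + 1)).filter (fun i => ¬ Even i) with hsO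
  set P₁ : Measure ℝ := ∑ i ∈ sE, ENNReal.ofReal (w i) • Measure.dirac (x i) with hP1
  set P₂ : Measure ℝ := ∑ i ∈ sO, ENNReal.ofReal (w i) • Measure.dirac (x i) with hP2
  obtain ⟨hEc, hOc⟩ := even_choose_sum n hn0
  have hwE : ∑ i ∈ sE, w i = 1 := by
    rw [hwdef]; simp only
    rw [← Finset.sum_div, hsE, hEc, div_self (by positivity)]
  have hwO : ∑ i ∈ sO, w i = 1 := by
    rw [hwdef]; simp only
    rw [← Finset.sum_div, hsO, hOc, div_self (by positivity)]
  -- total masses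
  have hmass : ∀ (s : Finset ℕ), (∑ i ∈ s, w i = 1) →
      (∑ i ∈ s, ENNReal.ofReal (w i) • Measure.dirac (x i)) Set.univ = 1 := by
    intro s hs
    rw [Measure.finset_sum_apply]
    simp only [Measure.smul_apply, smul_eq_mul, measure_univ, mul_one]
    rw [← ENNReal.ofReal_sum_of_nonneg (fun i _ => hw i), hs, ENNReal.ofReal_one]
  -- grid points lie in [0, M]
  have hxmem : ∀ i ∈ Finset.range (n + 1), x i ∈ Set.Icc 0 M := by
    intro i hi
    have hile : (i : ℝ) ≤ (n : ℝ) := by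
      exact_mod_cast Nat.lt_succ_iff.mp (Finset.mem_range.mp hi)
    constructor
    · positivity
    · have h1 : x i ≤ (n : ℝ) * h := mul_le_mul_of_nonneg_right hile hh.le
      have h2 : (n : ℝ) * h = M := by
        rw [hhdef, hn]
        push_cast
        field_simp
      linarith
  have hsupp : ∀ (s : Finset ℕ), s ⊆ Finset.range (n + 1) →
      (∑ i ∈ s, ENNReal.ofReal (w i) • Measure.dirac (x i)) (Set.Icc 0 M)ᶜ = 0 := by
    intro s hssub
    rw [Measure.finset_sum_apply]
    refine Finset.sum_eq_zero fun i hi => ?_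
    rw [Measure.smul_apply, Measure.dirac_apply,
      Set.indicator_of_notMem (by simpa using hxmem i (hssub hi))]
    simp
  refine ⟨P₁, P₂, ⟨hmass sE hwE⟩, ⟨hmass sO hwO⟩,
    hsupp sE (Finset.filter_subset _ _), hsupp sO (Finset.filter_subset _ _), ?_, ?_⟩
  · -- moments
    intro j hj1 hjk
    rw [hP1, hP2, integral_dirac_comb sE w hw x, integral_dirac_comb sO w hw x]
    have halt := moment_alt_zero h n j (by omega) ⟨k, by omega⟩
    have hsplit := alt_split n (fun i => w i * (x i) ^ j)
    have hzero : ∑ i ∈ Finset.range (n + 1), (-1 : ℝ) ^ i * (w i * (x i) ^ j) = 0 := by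
      calc ∑ i ∈ Finset.range (n + 1), (-1 : ℝ) ^ i * (w i * (x i) ^ j)
          = (∑ i ∈ Finset.range (n + 1),
              (-1 : ℝ) ^ i * (n.choose i : ℝ) * ((i : ℝ) * h) ^ j) / 2 ^ (n - 1) := by
            rw [Finset.sum_div]
            exact Finset.sum_congr rfl fun i _ => by rw [hwdef, hxdef]; ring
        _ = 0 := by rw [halt, zero_div]
    rw [hsplit, ← hsE, ← hsO] at hzero
    linarith
  · -- Wasserstein lower bound
    set S : Set ℝ := Set.range fun m : ℤ => 2 * h * (m : ℝ) with hS
    set ℓ₀ : ℝ → ℝ := fun t => - Metric.infDist t S with hl0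
    have lip₀ : LipschitzWith 1 ℓ₀ := (Metric.lipschitz_infDist_pt S).neg
    have hFint : ∀ (f : ℝ → ℝ), (∫ t, f t ∂P₁) - (∫ t, f t ∂P₂)
        = ∑ i ∈ sE, w i * f (x i) - ∑ i ∈ sO, w i * f (x i) := by
      intro f
      rw [hP1, hP2, integral_dirac_comb sE w hw x, integral_dirac_comb sO w hw x]
    have hbound : ∀ (f : ℝ → ℝ), LipschitzWith 1 f → ∀ (s : Finset ℕ),
        s ⊆ Finset.range (n + 1) → (∑ i ∈ s, w i = 1) →
        |∑ i ∈ s, w i * f (x i) - f 0| ≤ M := by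
      intro f hf s hsub hsum
      have heq : ∑ i ∈ s, w i * f (x i) - f 0
          = ∑ i ∈ s, w i * (f (x i) - f 0) := by
        rw [Finset.sum_congr rfl (fun i _ => mul_sub (w i) (f (x i)) (f 0)),
          Finset.sum_sub_distrib, ← Finset.sum_mul, hsum, one_mul]
      rw [heq]
      refine (Finset.abs_sum_le_sum_abs _ _).trans ?_
      have : ∀ i ∈ s, |w i * (f (x i) - f 0)| ≤ w i * M := by
        intro i hi
        rw [abs_mul, abs_of_nonneg (hw i)]
        refine mul_le_mul_of_nonneg_left ?_ (hw i)
        have hd := hf.dist_le_mul (x i) 0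
        rw [Real.dist_eq, Real.dist_eq, sub_zero] at hd
        obtain ⟨hx0, hxM⟩ := hxmem i (hsub hi)
        calc |f (x i) - f 0| ≤ 1 * |x i| := hd
          _ = x i := by rw [one_mul, abs_of_nonneg hx0]
          _ ≤ M := hxM
      refine (Finset.sum_le_sum this).trans ?_
      rw [← Finset.sum_mul, hsum, one_mul]
    have hbdd : BddAbove (Set.range fun ℓ : {f : ℝ → ℝ // LipschitzWith 1 f} =>
        (∫ t, ℓ.1 t ∂P₁) - (∫ t, ℓ.1 t ∂P₂)) := by
      refine ⟨2 * M, ?_⟩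
      rintro r ⟨ℓ, rfl⟩
      show (∫ t, ℓ.1 t ∂P₁) - (∫ t, ℓ.1 t ∂P₂) ≤ 2 * M
      rw [hFint ℓ.1]
      have hE := hbound ℓ.1 ℓ.2 sE (Finset.filter_subset _ _) hwE
      have hO := hbound ℓ.1 ℓ.2 sO (Finset.filter_subset _ _) hwO
      rw [abs_le] at hE hO
      linarith [hE.1, hE.2, hO.1, hO.2]
    -- evaluate the test function
    have hevenval : ∀ i ∈ sE, ℓ₀ (x i) = 0 := by
      intro i hi
      obtain ⟨t, ht⟩ := (Finset.mem_filter.mp hi).2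
      have hpt : x i = 2 * h * ((t : ℤ) : ℝ) := by
        rw [hxdef]; simp only; push_cast [ht]; ring
      rw [hl0]; simp only
      rw [hpt, grid_even h (t : ℤ), neg_zero]
    have hoddval : ∀ i ∈ sO, ℓ₀ (x i) = -h := by
      intro i hi
      obtain ⟨t, ht⟩ := Nat.not_even_iff_odd.mp (Finset.mem_filter.mp hi).2
      have hpt : x i = 2 * h * ((t : ℤ) : ℝ) + h := by
        rw [hxdef]; simp only; push_cast [ht]; ring
      rw [hl0]; simp only
      rw [hpt, grid_odd h hh (t : ℤ)]
    have hval : (∫ t, ℓ₀ t ∂P₁) - (∫ t, ℓ₀ t ∂P₂) = h := by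
      rw [hFint ℓ₀]
      have h1 : ∑ i ∈ sE, w i * ℓ₀ (x i) = 0 :=
        Finset.sum_eq_zero fun i hi => by rw [hevenval i hi, mul_zero]
      have h2 : ∑ i ∈ sO, w i * ℓ₀ (x i) = -h := by
        rw [Finset.sum_congr rfl (fun i hi => by rw [hoddval i hi, mul_neg])]
        rw [Finset.sum_neg_distrib, ← Finset.sum_mul, hwO, one_mul]
      rw [h1, h2]
      ring
    have hle : (∫ t, ℓ₀ t ∂P₁) - (∫ t, ℓ₀ t ∂P₂) ≤ W1 P₁ P₂ :=
      le_ciSup hbdd (⟨ℓ₀, lip₀⟩ : {f : ℝ → ℝ // LipschitzWith 1 f})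
    rw [hval] at hle
    exact hle
end
end

section
/- Let k be a non-negative integer and let p_k(θ) = Σ_{x=0}^k c_x θ^x be a real polynomial of degree at most k. Then its coefficients satisfy |c_x| ≤ (k^x / x!) · max over |θ| ≤ 1 of |p_k(θ)|, for each 0 ≤ x ≤ k. -/
/-!
V. Markov's argument. Replacing `p` by its part of the parity of `x`, and `k` by the largest
`n ≤ k` of that parity, one may write `p(θ) = θ^σ Q(θ²)` and `T_n(θ) = θ^σ G(θ²)` with
`σ = n % 2` and `deg Q, deg G ≤ m = n / 2`. At the nodes `u_j = cos²(jπ/n)`, `j ≤ m`,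
which are nonnegative and decreasing, `T_n(cos(jπ/n)) = (-1)^j` gives
`|Q(u_j)| ≤ (-1)^j M G(u_j)`. Because the nodes are nonnegative, the `y`-th coefficient of the
`j`-th Lagrange basis polynomial has sign `(-1)^(j+m+y)`, so Lagrange interpolation yields
`|Q_y| ≤ M |G_y|`, that is `|c_x| ≤ M |t_{n,x}|`. Finally the recursion
`T_{n+2} = 2X T_{n+1} - T_n` gives `|t_{n,x}| ≤ n^x / x!`.
-/

open Polynomial Finset
open scoped Nat

namespace Polynomial

theorem coeff_comp_neg_X {R : Type*} [CommRing R] (p : R[X]) (z : ℕ) :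
    (p.comp (-X)).coeff z = (-1) ^ z * p.coeff z := by
  induction p using Polynomial.induction_on' with
  | add p q hp hq => simp [add_comp, hp, hq, mul_add]
  | monomial k a =>
    rw [← C_mul_X_pow_eq_monomial, mul_comp, C_comp, X_pow_comp, neg_pow, ← mul_assoc,
      show (-1 : R[X]) ^ k = C ((-1) ^ k) by simp, ← C_mul, coeff_C_mul_X_pow, coeff_C_mul_X_pow]
    split_ifs with h <;> simp [h, mul_comm]

section Parity

variable {R : Type*} [CommRing R] [NoZeroDivisors R] [CharZero R]

theorem coeff_eq_zero_of_comp_neg_X_eq {f : R[X]} {n z : ℕ} (hf : f.comp (-X) = (-1) ^ n * f)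
    (hz : z % 2 ≠ n % 2) : f.coeff z = 0 := by
  have h := congrArg (coeff · z) hf
  simp only [coeff_comp_neg_X] at h
  rw [show (-1 : R[X]) ^ n = C ((-1) ^ n) by simp, coeff_C_mul] at h
  have hodd : (-1 : R) ^ (z + n) = -1 := Odd.neg_one_pow (by rw [Nat.odd_iff]; omega)
  have : f.coeff z = - f.coeff z := by
    calc f.coeff z = (-1) ^ z * ((-1) ^ z * f.coeff z) := by
          rw [← mul_assoc, ← pow_add, Even.neg_one_pow ⟨z, rfl⟩, one_mul]
      _ = - f.coeff z := by rw [h, ← mul_assoc, ← pow_add, hodd, neg_one_mul]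
  exact self_eq_neg.mp this

theorem exists_eq_X_pow_mul_expand_of_comp_neg_X {f : R[X]} {n : ℕ}
    (hf : f.comp (-X) = (-1) ^ n * f) : ∃ Q : R[X], f = X ^ (n % 2) * expand R 2 Q := by
  have hvan := fun z => coeff_eq_zero_of_comp_neg_X_eq (z := z) hf
  obtain ⟨g, rfl⟩ : X ^ (n % 2) ∣ f := X_pow_dvd_iff.mpr fun d hd => hvan d (by omega)
  refine ⟨contract 2 g, congrArg _ (ext fun z => ?_)⟩
  rw [coeff_expand two_pos, coeff_contract two_ne_zero]
  split_ifs with h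
  · rw [Nat.div_mul_cancel h]
  · have := hvan (z + n % 2) (by omega)
    rwa [mul_comm, coeff_mul_X_pow] at this

end Parity

section ExpandTwo

variable {R : Type*} [CommRing R]

theorem coeff_X_pow_mul_expand_two (Q : R[X]) (σ i : ℕ) :
    (X ^ σ * expand R 2 Q).coeff (2 * i + σ) = Q.coeff i := by
  rw [mul_comm, coeff_mul_X_pow, coeff_expand_mul' two_pos]

theorem natDegree_le_of_natDegree_X_pow_mul_expand_two_le {Q : R[X]} {σ m : ℕ}
    (h : (X ^ σ * expand R 2 Q).natDegree ≤ 2 * m + σ) : Q.natDegree ≤ m :=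
  natDegree_le_iff_coeff_eq_zero.mpr fun i hi => by
    rw [← coeff_X_pow_mul_expand_two Q σ i]
    exact coeff_eq_zero_of_natDegree_lt (by omega)

theorem eval_X_pow_mul_expand_two (Q : R[X]) (σ : ℕ) (θ : R) :
    (X ^ σ * expand R 2 Q).eval θ = θ ^ σ * Q.eval (θ ^ 2) := by
  simp [expand_eval]

end ExpandTwo

section ParityPart

noncomputable def parityPart (p : ℝ[X]) (x : ℕ) : ℝ[X] :=
  (2 : ℝ)⁻¹ • (p + (-1) ^ x * p.comp (-X))

variable (p : ℝ[X]) (x : ℕ)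

theorem comp_neg_X_parityPart : (parityPart p x).comp (-X) = (-1) ^ x * parityPart p x := by
  have hsq : (-1 : ℝ[X]) ^ x * (-1) ^ x = 1 := pow_mul_pow_eq_one x (by norm_num)
  simp only [parityPart, smul_comp, add_comp, mul_comp, pow_comp, neg_comp, one_comp,
    comp_neg_X_comp_neg_X, mul_smul_comm, mul_add, ← mul_assoc, hsq, one_mul, add_comm]

theorem coeff_parityPart (z : ℕ) :
    (parityPart p x).coeff z = (1 + (-1) ^ (x + z)) / 2 * p.coeff z := by
  rw [parityPart, coeff_smul, coeff_add, show (-1 : ℝ[X]) ^ x = C ((-1) ^ x) by simp, coeff_C_mul,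
    coeff_comp_neg_X, pow_add, smul_eq_mul]
  ring

theorem abs_eval_parityPart_le (θ : ℝ) :
    |(parityPart p x).eval θ| ≤ (|p.eval θ| + |p.eval (-θ)|) / 2 := by
  simp only [parityPart, eval_smul, eval_add, eval_mul, eval_pow, eval_neg, eval_one, eval_comp,
    eval_X, smul_eq_mul, abs_mul, abs_inv, abs_two]
  have := abs_add_le (p.eval θ) ((-1) ^ x * p.eval (-θ))
  rw [abs_mul, abs_neg_one_pow, one_mul] at this
  linarith

end ParityPart

theorem coeff_prod_X_add_C_nonneg {ι : Type*} (s : Finset ι) {w : ι → ℝ}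
    (hw : ∀ i ∈ s, 0 ≤ w i) (k : ℕ) : 0 ≤ (∏ i ∈ s, (X + C (w i))).coeff k := by
  refine Finset.prod_induction _ (fun P : ℝ[X] => ∀ k, 0 ≤ P.coeff k) (fun P Q hP hQ k => ?_)
    (fun k => ?_) (fun i hi k => ?_) k
  · rw [coeff_mul]; exact sum_nonneg fun _ _ => mul_nonneg (hP _) (hQ _)
  · rw [coeff_one]; split_ifs <;> norm_num
  · rw [coeff_add, coeff_X, coeff_C]; split_ifs <;> linarith [hw i hi]

theorem neg_one_pow_mul_coeff_prod_X_sub_C_nonneg {ι : Type*} (s : Finset ι) {w : ι → ℝ}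
    (hw : ∀ i ∈ s, 0 ≤ w i) (k : ℕ) :
    0 ≤ (-1) ^ (#s + k) * (∏ i ∈ s, (X - C (w i))).coeff k := by
  have h : (∏ i ∈ s, (X - C (w i))).comp (-X) = (-1) ^ #s * ∏ i ∈ s, (X + C (w i)) := by
    rw [Polynomial.prod_comp, ← prod_neg]
    refine prod_congr rfl fun i _ => ?_
    simp only [sub_comp, X_comp, C_comp]
    ring
  have hk := congrArg (coeff · k) h
  simp only [coeff_comp_neg_X, show (-1 : ℝ[X]) ^ #s = C ((-1) ^ #s) by simp, coeff_C_mul] at hk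
  calc (0 : ℝ) ≤ (∏ i ∈ s, (X + C (w i))).coeff k := coeff_prod_X_add_C_nonneg s hw k
    _ = (-1) ^ #s * ((-1) ^ #s * (∏ i ∈ s, (X + C (w i))).coeff k) := by
        rw [← mul_assoc, ← pow_add, Even.neg_one_pow ⟨_, rfl⟩, one_mul]
    _ = _ := by rw [← hk, ← mul_assoc, pow_add]

end Polynomial

namespace Lagrange

variable {m : ℕ} {u : ℕ → ℝ}

theorem zero_lt_neg_one_pow_mul_prod_sub (hu : StrictAntiOn u (Set.Iic m)) {j : ℕ}
    (hj : j ≤ m) :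
    0 < (-1) ^ j * ∏ i ∈ (range (m + 1)).erase j, (u j - u i) := by
  have hlt : ∀ i ≤ m, ∀ i' ≤ m, i < i' → u i' < u i := fun i hi i' hi' h => hu hi hi' h
  have h₁ : 0 < ∏ i ∈ range j, (-(u j - u i)) := prod_pos fun i hi =>
    neg_pos.mpr (sub_neg.mpr (hlt _ (by simp at hi; omega) _ hj (by simpa using hi)))
  have h₂ : 0 < ∏ i ∈ Ioc j m, (u j - u i) :=
    prod_pos fun i hi => sub_pos.mpr (hlt _ hj _ (mem_Ioc.mp hi).2 (mem_Ioc.mp hi).1)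
  rw [prod_neg, card_range] at h₁
  have hsplit : (range (m + 1)).erase j = range j ∪ Ioc j m := by ext; simp; omega
  rw [hsplit, prod_union (by rw [disjoint_left]; simp; omega), ← mul_assoc]
  exact mul_pos h₁ h₂

theorem neg_one_pow_mul_coeff_basis_nonneg (hu : StrictAntiOn u (Set.Iic m))
    (hu0 : ∀ j ≤ m, 0 ≤ u j) {j : ℕ} (hj : j ≤ m) (y : ℕ) :
    0 ≤ (-1) ^ (j + m + y) * (Lagrange.basis (range (m + 1)) u j).coeff y := by
  set D := ∏ i ∈ (range (m + 1)).erase j, (u j - u i)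
  set N := ∏ i ∈ (range (m + 1)).erase j, (X - C (u i))
  have hbasis : Lagrange.basis (range (m + 1)) u j = C D⁻¹ * N := by
    rw [Lagrange.basis, ← prod_inv_distrib, map_prod, ← prod_mul_distrib]
    rfl
  have hD := zero_lt_neg_one_pow_mul_prod_sub hu hj
  have hN := neg_one_pow_mul_coeff_prod_X_sub_C_nonneg ((range (m + 1)).erase j) (w := u)
    (fun i hi => hu0 i (by simp at hi; omega)) y
  rw [card_erase_of_mem (by simp; omega), card_range, Nat.add_sub_cancel] at hN
  rw [hbasis, coeff_C_mul]
  calc (0 : ℝ) ≤ ((-1) ^ j * D)⁻¹ * ((-1) ^ (m + y) * N.coeff y) :=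
        mul_nonneg (inv_nonneg.mpr hD.le) hN
    _ = _ := by rw [mul_inv, ← inv_pow, inv_neg_one, add_assoc j, pow_add]; ring

theorem abs_coeff_le_of_abs_eval_le_alternating (hu : StrictAntiOn u (Set.Iic m))
    (hu0 : ∀ j ≤ m, 0 ≤ u j) {f g : ℝ[X]} (hf : f.natDegree ≤ m) (hg : g.natDegree ≤ m)
    (hfg : ∀ j ≤ m, |f.eval (u j)| ≤ (-1) ^ j * g.eval (u j)) (y : ℕ) :
    |f.coeff y| ≤ |g.coeff y| := by
  set s := range (m + 1)
  set b := fun j => (Lagrange.basis s u j).coeff y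
  have hs : ∀ j ∈ s, j ≤ m := fun j hj => Nat.lt_succ_iff.mp (mem_range.mp hj)
  have hinj : Set.InjOn u s := hu.injOn.mono fun j hj => hs j hj
  have hcoeff : ∀ q : ℝ[X], q.natDegree ≤ m →
      q.coeff y = ∑ j ∈ s, q.eval (u j) * b j := by
    intro q hq
    have hdeg : q.degree < #s := by
      rw [card_range]
      exact (degree_le_of_natDegree_le hq).trans_lt (by exact_mod_cast m.lt_succ_self)
    conv_lhs => rw [eq_interpolate hinj hdeg]
    simp [interpolate_apply, finsetSum_coeff, coeff_C_mul, b]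
  have habs : ∀ j ∈ s, |b j| = (-1) ^ (j + m + y) * b j := fun j hj => by
    rw [← abs_of_nonneg (neg_one_pow_mul_coeff_basis_nonneg hu hu0 (hs j hj) y),
      abs_mul, abs_neg_one_pow, one_mul]
  calc |f.coeff y| = |∑ j ∈ s, f.eval (u j) * b j| := by rw [hcoeff f hf]
    _ ≤ ∑ j ∈ s, |f.eval (u j)| * |b j| := by
        simpa only [abs_mul] using abs_sum_le_sum_abs (fun j => f.eval (u j) * b j) s
    _ ≤ ∑ j ∈ s, ((-1) ^ j * g.eval (u j)) * ((-1) ^ (j + m + y) * b j) :=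
        sum_le_sum fun j hj =>
          habs j hj ▸ mul_le_mul_of_nonneg_right (hfg j (hs j hj)) (abs_nonneg _)
    _ = (-1) ^ (m + y) * g.coeff y := by
        rw [hcoeff g hg, mul_sum]
        refine sum_congr rfl fun j _ => ?_
        have hsq : (-1 : ℝ) ^ j * (-1) ^ j = 1 := pow_mul_pow_eq_one j (by norm_num)
        rw [add_assoc, pow_add]
        linear_combination ((-1) ^ (m + y) * g.eval (u j) * b j) * hsq
    _ ≤ |g.coeff y| := by
        simpa only [abs_mul, abs_neg_one_pow, one_mul] using
          le_abs_self ((-1) ^ (m + y) * g.coeff y)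

end Lagrange

theorem pow_succ_add_two_mul_pow_le {b : ℝ} (hb : 0 ≤ b) (z : ℕ) :
    b ^ (z + 1) + 2 * (z + 1) * (b + 1) ^ z ≤ (b + 2) ^ (z + 1) := by
  induction z with
  | zero => norm_num
  | succ z ih =>
    have h : (b + 1) ^ (z + 1) - b ^ (z + 1) ≤ (z + 1) * (b + 1) ^ z := by
      have := (le_abs_self _).trans (abs_pow_sub_pow_le (b + 1) b (z + 1))
      rwa [add_sub_cancel_left, abs_one, one_mul, abs_of_nonneg hb, abs_of_nonneg (by linarith),
        max_eq_left (by linarith), Nat.add_sub_cancel, Nat.cast_succ] at this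
    have h2 := mul_le_mul_of_nonneg_left ih (by linarith : (0 : ℝ) ≤ b + 2)
    rw [pow_succ' (b + 2) (z + 1), pow_succ' b (z + 1), pow_succ' (b + 1) z]
    push_cast
    nlinarith [pow_succ' (b + 1) z]

namespace Polynomial.Chebyshev

open Real

theorem T_comp_neg_X (n : ℕ) : (T ℝ n).comp (-X) = (-1) ^ n * T ℝ n :=
  Polynomial.funext fun θ => by simp [T_eval_neg]

theorem coeff_T_add_two (n : ℤ) (z : ℕ) :
    (T ℝ (n + 2)).coeff (z + 1) = 2 * (T ℝ (n + 1)).coeff z - (T ℝ n).coeff (z + 1) := by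
  rw [T_add_two, coeff_sub, mul_assoc, coeff_ofNat_mul, coeff_X_mul]

theorem coeff_zero_T_add_two (n : ℤ) : (T ℝ (n + 2)).coeff 0 = -(T ℝ n).coeff 0 := by
  simp [T_add_two]

theorem abs_coeff_T_le (n z : ℕ) : |(T ℝ n).coeff z| ≤ n ^ z / z ! := by
  induction n using Nat.twoStepInduction generalizing z with
  | zero => rcases z with _ | z <;> simp [coeff_one]
  | one => rcases z with _ | _ | z <;> simp [coeff_X]
  | more n ih₀ ih₁ =>
    rw [show ((n + 2 : ℕ) : ℤ) = n + 2 by push_cast; ring]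
    rcases z with _ | z
    · simpa [coeff_zero_T_add_two] using ih₀ 0
    have h₀ := ih₀ (z + 1)
    have h₁ := ih₁ z
    rw [coeff_T_add_two]
    push_cast at h₀ h₁ ⊢
    calc |2 * (T ℝ (n + 1)).coeff z - (T ℝ n).coeff (z + 1)|
        ≤ 2 * |(T ℝ (n + 1)).coeff z| + |(T ℝ n).coeff (z + 1)| := by
          grw [abs_sub, abs_mul, abs_two]
      _ ≤ 2 * ((n + 1) ^ z / z !) + n ^ (z + 1) / (z + 1)! := by gcongr
      _ = (n ^ (z + 1) + 2 * (z + 1) * (n + 1) ^ z) / (z + 1)! := by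
          rw [Nat.factorial_succ]; push_cast; field_simp; ring
      _ ≤ (n + 2) ^ (z + 1) / (z + 1)! := by
          gcongr; exact pow_succ_add_two_mul_pow_le n.cast_nonneg z

theorem node_pos {n j : ℕ} (h : 2 * j < n) : 0 < node n j := by
  have hn : (0 : ℝ) < n := by exact_mod_cast (show 0 < n by omega)
  have h' : (2 * j : ℝ) < n := by exact_mod_cast h
  refine cos_pos_of_mem_Ioo ⟨by linarith [pi_pos, show 0 ≤ j * π / n by positivity], ?_⟩
  rw [div_lt_div_iff₀ hn two_pos]
  nlinarith [pi_pos]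

theorem node_nonneg {n j : ℕ} (h : 2 * j ≤ n) : 0 ≤ node n j := by
  rcases Nat.eq_zero_or_pos n with rfl | hn
  · rw [show j = 0 by omega, node_eq_one]; exact zero_le_one
  have hn' : (0 : ℝ) < n := by exact_mod_cast hn
  have h' : (2 * j : ℝ) ≤ n := by exact_mod_cast h
  refine cos_nonneg_of_mem_Icc ⟨by linarith [pi_pos, show 0 ≤ j * π / n by positivity], ?_⟩
  rw [div_le_div_iff₀ hn' two_pos]
  nlinarith [pi_pos]

theorem abs_coeff_le_mul_abs_coeff_T {n x : ℕ} {f : ℝ[X]} {M : ℝ} (hdeg : f.natDegree ≤ n)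
    (hpar : f.comp (-X) = (-1) ^ n * f) (hx : x % 2 = n % 2)
    (hM : ∀ θ ∈ Set.Icc (-1 : ℝ) 1, |f.eval θ| ≤ M) :
    |f.coeff x| ≤ M * |(T ℝ n).coeff x| := by
  set σ := n % 2
  set m := n / 2
  have hn : n = 2 * m + σ := (Nat.div_add_mod n 2).symm
  have hx' : x = 2 * (x / 2) + σ := by omega
  obtain ⟨Q, rfl⟩ := exists_eq_X_pow_mul_expand_of_comp_neg_X hpar
  obtain ⟨G, hG⟩ := exists_eq_X_pow_mul_expand_of_comp_neg_X (T_comp_neg_X n)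
  have hM0 : 0 ≤ M := (abs_nonneg _).trans (hM 0 (by norm_num))
  set u := fun j => node n j ^ 2
  have hu : StrictAntiOn u (Set.Iic m) := fun i _ j hj hij =>
    pow_lt_pow_left₀ (node_lt (by simp at hj; omega) hij) (node_nonneg (by simp at hj; omega))
      two_ne_zero
  have he : ∀ j ≤ m, 0 < node n j ^ σ := fun j hj => by
    rcases Nat.mod_two_eq_zero_or_one n with h | h
    · simp [σ, h]
    · exact pow_pos (node_pos (by omega)) _
  have hQG : ∀ j ≤ m, |Q.eval (u j)| ≤ (-1) ^ j * (M • G).eval (u j) := fun j hj => by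
    have hf := eval_X_pow_mul_expand_two Q σ (node n j)
    have hT := eval_X_pow_mul_expand_two G σ (node n j)
    rw [← hG, eval_T_real_node (by simp; omega)] at hT
    refine le_of_mul_le_mul_left ?_ (he j hj)
    calc node n j ^ σ * |Q.eval (u j)| = |(X ^ σ * expand ℝ 2 Q).eval (node n j)| := by
          rw [hf, abs_mul, abs_of_pos (he j hj)]
      _ ≤ M := hM _ node_mem_Icc
      _ = node n j ^ σ * ((-1) ^ j * (M • G).eval (u j)) := by
          have hsq : (-1 : ℝ) ^ j * (-1) ^ j = 1 := pow_mul_pow_eq_one j (by norm_num)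
          rw [eval_smul, smul_eq_mul]
          linear_combination (M * (-1) ^ j) * hT - M * hsq
  have hQdeg : Q.natDegree ≤ m :=
    natDegree_le_of_natDegree_X_pow_mul_expand_two_le (hdeg.trans hn.le)
  have hGdeg : (M • G).natDegree ≤ m := (natDegree_smul_le M G).trans <|
    natDegree_le_of_natDegree_X_pow_mul_expand_two_le (by rw [← hG, natDegree_T]; omega)
  have hcmp := Lagrange.abs_coeff_le_of_abs_eval_le_alternating hu (fun j _ => sq_nonneg _)
    hQdeg hGdeg hQG (x / 2)
  rwa [coeff_smul, smul_eq_mul, abs_mul, abs_of_nonneg hM0, ← coeff_X_pow_mul_expand_two Q σ,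
    ← coeff_X_pow_mul_expand_two G σ, ← hG, ← hx'] at hcmp

end Polynomial.Chebyshev

/-- coefficient bound for polynomials bounded on `[-1, 1]`,
Timan Ch. 2.6 Eq. 9.  If `p` is a real polynomial of degree at most `k`, then
each coefficient satisfies `|c_x| ≤ (k^x / x!) max_{|θ| ≤ 1} |p(θ)|`. -/
theorem stmt_13 (k : ℕ) (p : Polynomial ℝ) (hp : p.natDegree ≤ k)
    (x : ℕ) (hx : x ≤ k) :
    |p.coeff x| ≤ (k : ℝ) ^ x / (Nat.factorial x) *
      sSup ((fun θ => |p.eval θ|) '' Set.Icc (-1 : ℝ) 1) := by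
  set M := sSup ((fun θ => |p.eval θ|) '' Set.Icc (-1 : ℝ) 1)
  have hM : ∀ θ ∈ Set.Icc (-1 : ℝ) 1, |p.eval θ| ≤ M := fun θ hθ =>
    le_csSup (isCompact_Icc.image (by fun_prop)).bddAbove (Set.mem_image_of_mem _ hθ)
  have hM0 : 0 ≤ M := (abs_nonneg _).trans (hM 0 (by norm_num))
  -- the largest `n ≤ k` with `n ≡ x [MOD 2]`
  set n := k - (k - x) % 2
  have hnx : n % 2 = x % 2 := by omega
  set P := parityPart p x
  have hPpar : P.comp (-X) = (-1) ^ n * P := by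
    rw [comp_neg_X_parityPart, neg_one_pow_eq_pow_mod_two, ← hnx, ← neg_one_pow_eq_pow_mod_two]
  have hPdeg : P.natDegree ≤ n := natDegree_le_iff_coeff_eq_zero.mpr fun z hz => by
    by_cases hzk : k < z
    · rw [coeff_parityPart, coeff_eq_zero_of_natDegree_lt (hp.trans_lt hzk), mul_zero]
    · exact coeff_eq_zero_of_comp_neg_X_eq hPpar (by omega)
  have hPM : ∀ θ ∈ Set.Icc (-1 : ℝ) 1, |P.eval θ| ≤ M := fun θ hθ =>
    (abs_eval_parityPart_le p x θ).trans <| by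
      linarith [hM θ hθ, hM (-θ) ⟨by linarith [hθ.2], by linarith [hθ.1]⟩]
  calc |p.coeff x| = |P.coeff x| := by
        rw [coeff_parityPart, Even.neg_one_pow ⟨x, rfl⟩]; norm_num
    _ ≤ M * |(Chebyshev.T ℝ n).coeff x| :=
        Chebyshev.abs_coeff_le_mul_abs_coeff_T hPdeg hPpar hnx.symm hPM
    _ ≤ M * (n ^ x / x !) := by gcongr; exact Chebyshev.abs_coeff_T_le n x
    _ ≤ k ^ x / x ! * M := by rw [mul_comm]; gcongr; omega
end

section
/- In the discrete exponential family model, let C, C' > 0 be constants such that w(x) θ_*^x ≤ C and |g^{(m)}(0) θ_*^m / m!| ≤ C' (C+1)^m for all nonnegative integers x, m. If Q_1 and Q_2 are mixing distributions supported on [0, θ_*/(C+3)] whose first k moments are identical (∫ θ^j dQ_1 = ∫ θ^j dQ_2 for j = 1,…,k), then the total variation distance between the mixture pmfs satisfies TV(h_{Q_1}, h_{Q_2}) ≤ 2 (C+3)² C' ((C+2)/(C+3))^k. -/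
open MeasureTheory Real Set

noncomputable section

/-- The measure on a countable (here: discrete) measurable type induced by a
probability mass function `p`. -/
def pmfMeasure {α : Type*} [MeasurableSpace α] (p : α → ℝ) : Measure α :=
  Measure.sum fun a => ENNReal.ofReal (p a) • Measure.dirac a

/-- `Q` is a mixing distribution on `[0, θs]`: a Borel probability measure
supported on `[0, θs]`. -/
def IsMixing (θs : ℝ) (Q : Measure ℝ) : Prop :=
  IsProbabilityMeasure Q ∧ Q (Set.Icc 0 θs)ᶜ = 0

/-- The normalizing function `g(θ) = (∑_x w(x) θ^x)⁻¹` of the discrete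
exponential family. -/
def gfun (w : ℕ → ℝ) (θ : ℝ) : ℝ := (∑' x : ℕ, w x * θ ^ x)⁻¹

/-- The discrete exponential family pmf `f(x | θ) = g(θ) w(x) θ^x`. -/
def ffun (w : ℕ → ℝ) (x : ℕ) (θ : ℝ) : ℝ := gfun w θ * w x * θ ^ x

/-- The mixture pmf `h_Q(x) = ∫ f(x | θ) dQ(θ)`. -/
def mixPMF (w : ℕ → ℝ) (Q : Measure ℝ) (x : ℕ) : ℝ := ∫ θ, ffun w x θ ∂Q

/-- The joint law of an i.i.d. sample of size `n` drawn from the mixture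
pmf `h_Q`. -/
def dataMeasure (w : ℕ → ℝ) (Q : Measure ℝ) (n : ℕ) : Measure (Fin n → ℕ) :=
  pmfMeasure fun xs => ∏ i, mixPMF w Q (xs i)

/-- `Qhat` is a nonparametric maximum likelihood estimator: for every data set
`xs` the measure `Qhat xs` is a mixing distribution on `[0, θs]` maximizing the
log-likelihood `∑ i log h_Q(xs i)` over all mixing distributions `Q`. -/
def IsMLE (w : ℕ → ℝ) (θs : ℝ) {n : ℕ} (Qhat : (Fin n → ℕ) → Measure ℝ) : Prop :=
  (∀ xs, IsMixing θs (Qhat xs)) ∧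
  ∀ xs, ∀ Q : Measure ℝ, IsMixing θs Q →
    ∑ i, Real.log (mixPMF w Q (xs i)) ≤ ∑ i, Real.log (mixPMF w (Qhat xs) (xs i))

/-- The empirical pmf `h^obs(x) = n⁻¹ ∑_i 1{X_i = x}` of a sample `xs`. -/
def empPMF {n : ℕ} (xs : Fin n → ℕ) (x : ℕ) : ℝ :=
  (n : ℝ)⁻¹ * ∑ i, if xs i = x then (1 : ℝ) else 0

/-! The normalizer `g = (∑ w(x) θ^x)⁻¹` is analytic on `[0, R)`, and the bound on its Taylor
coefficients `b_m = g^{(m)}(0) / m!` makes its Taylor series at `0` converge on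
`[0, θs / (C + 1))`; by the identity theorem along the interval, `g` equals that series on
`[0, θs / (C + 3)]`. Integrating term by term, `h_Q(x) = ∑_m w(x) b_m ∫ θ^(x+m) dQ`, so in
`h_{Q₁}(x) - h_{Q₂}(x)` only moments of order `x + m > k` survive. Each surviving term is at most
`2 C C' ((C + 2) / (C + 3))^k (C + 2)^{-x} ((C + 1) / (C + 2))^m`, and summing this double
geometric series gives the bound. -/

open FormalMultilinearSeries
open scoped Nat NNReal ENNReal

theorem FormalMultilinearSeries.analyticAt_sum_of_norm_lt {𝕜 E F : Type*}
    [NontriviallyNormedField 𝕜] [NormedAddCommGroup E] [NormedSpace 𝕜 E]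
    [NormedAddCommGroup F] [NormedSpace 𝕜 F] [CompleteSpace F]
    {p : FormalMultilinearSeries 𝕜 E F} {r : ℝ} (hr : (r.toNNReal : ℝ≥0∞) ≤ p.radius) {y : E}
    (hy : ‖y‖ < r) : AnalyticAt 𝕜 p.sum y := by
  have hy' : y ∈ Metric.eball 0 p.radius := by
    refine Metric.eball_subset_eball hr ?_
    rwa [Metric.eball_coe, Metric.mem_ball, dist_zero_right,
      Real.coe_toNNReal _ ((norm_nonneg y).trans hy.le)]
  exact (p.hasFPowerSeriesOnBall (pos_of_gt hy')).analyticAt_of_mem hy'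

theorem AnalyticOnNhd.eqOn_ofScalarsSum_taylor {𝕜 : Type*} [NontriviallyNormedField 𝕜]
    [CompleteSpace 𝕜] [CharZero 𝕜] {f : 𝕜 → 𝕜} {U : Set 𝕜} (hf : AnalyticOnNhd 𝕜 f U)
    (hT : AnalyticOnNhd 𝕜 (ofScalarsSum fun n => iteratedDeriv n f 0 / n !) U)
    (hU : IsPreconnected U) (h0 : (0 : 𝕜) ∈ U) :
    EqOn f (ofScalarsSum fun n => iteratedDeriv n f 0 / n !) U := by
  refine hf.eqOn_of_preconnected_of_eventuallyEq hT hU h0 ?_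
  filter_upwards [(hf 0 h0).hasFPowerSeriesAt.eventually_hasSum] with y hy
  simpa [ofScalarsSum_eq_tsum, mul_comm] using hy.tsum_eq.symm

theorem summable_abs_mul_pow_of_abs_mul_pow_le {a : ℕ → ℝ} {r K t : ℝ}
    (ha : ∀ n, |a n| * r ^ n ≤ K) (ht0 : 0 ≤ t) (htr : t < r) :
    Summable fun n => |a n| * t ^ n := by
  have hr : 0 < r := ht0.trans_lt htr
  refine ((summable_geometric_of_lt_one (div_nonneg ht0 hr.le)
    ((div_lt_one hr).2 htr)).mul_left K).of_nonneg_of_le (fun n => by positivity) fun n => ?_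
  calc |a n| * t ^ n = |a n| * r ^ n * (t / r) ^ n := by
        rw [div_pow, mul_assoc, mul_div_cancel₀ _ (by positivity)]
    _ ≤ K * (t / r) ^ n := by gcongr; exact ha n

theorem analyticAt_gfun {w : ℕ → ℝ} (hw : ∀ x, 0 < w x) {R θ : ℝ}
    (hR : Summable fun x => w x * R ^ x) (hθ0 : 0 ≤ θ) (hθR : θ < R) :
    AnalyticAt ℝ (gfun w) θ := by
  have hgfun : gfun w = fun θ => (ofScalarsSum w θ)⁻¹ := by
    funext θ
    simp [gfun, ofScalarsSum_eq_tsum]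
  have hrad : (R.toNNReal : ℝ≥0∞) ≤ (ofScalars ℝ w).radius := by
    refine le_radius_of_summable_norm _ (hR.congr fun n => ?_)
    rw [ofScalars_norm, Real.norm_of_nonneg (hw n).le, Real.coe_toNNReal _ (by linarith)]
  have hsum : Summable fun x => w x * θ ^ x :=
    hR.of_nonneg_of_le (fun x => mul_nonneg (hw x).le (pow_nonneg hθ0 x))
      fun x => mul_le_mul_of_nonneg_left (pow_le_pow_left₀ hθ0 hθR.le x) (hw x).le
  have hpos : 0 < ofScalarsSum w θ := by
    simp only [ofScalarsSum_eq_tsum, smul_eq_mul]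
    exact hsum.tsum_pos (fun x => mul_nonneg (hw x).le (pow_nonneg hθ0 x)) 0 (by simpa using hw 0)
  rw [hgfun]
  exact (analyticAt_sum_of_norm_lt hrad (by rwa [Real.norm_of_nonneg hθ0])).inv hpos.ne'

theorem gfun_eqOn_tsum_taylor {w : ℕ → ℝ} (hw : ∀ x, 0 < w x) {R r K t : ℝ}
    (hR : Summable fun x => w x * R ^ x) (htR : t < R) (htr : t < r)
    (hK : ∀ n, |iteratedDeriv n (gfun w) 0 / n !| * r ^ n ≤ K) :
    EqOn (gfun w) (fun θ => ∑' n, iteratedDeriv n (gfun w) 0 / n ! * θ ^ n) (Icc 0 t) := by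
  intro θ hθ
  have hrad : (r.toNNReal : ℝ≥0∞) ≤
      (ofScalars ℝ fun n => iteratedDeriv n (gfun w) 0 / n !).radius := by
    refine le_radius_of_bound _ K fun n => ?_
    rw [ofScalars_norm, Real.norm_eq_abs, Real.coe_toNNReal _ (by linarith [hθ.1, hθ.2])]
    exact hK n
  -- `g` may fail to be analytic at negative points, hence the interval rather than a ball.
  have hf : AnalyticOnNhd ℝ (gfun w) (Icc 0 t) := fun y hy =>
    analyticAt_gfun hw hR hy.1 (by linarith [hy.2])
  have hT : AnalyticOnNhd ℝ (ofScalarsSum fun n => iteratedDeriv n (gfun w) 0 / n !)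
      (Icc 0 t) := fun y hy =>
    analyticAt_sum_of_norm_lt hrad (by rw [Real.norm_of_nonneg hy.1]; linarith [hy.2])
  simpa [ofScalarsSum_eq_tsum, mul_comm] using
    hf.eqOn_ofScalarsSum_taylor hT isPreconnected_Icc ⟨le_rfl, hθ.1.trans hθ.2⟩ hθ

theorem hasSum_integral_tsum_mul_pow_mul_pow {Q : Measure ℝ} [IsFiniteMeasure Q] {a : ℕ → ℝ}
    {t : ℝ} (hQ : ∀ᵐ θ ∂Q, |θ| ≤ t) (ha : Summable fun n => |a n| * t ^ n) (x : ℕ) :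
    HasSum (fun n => a n * ∫ θ, θ ^ (n + x) ∂Q) (∫ θ, (∑' n, a n * θ ^ n) * θ ^ x ∂Q) := by
  have hbound : ∀ n, ∀ᵐ θ ∂Q, ‖a n * θ ^ (n + x)‖ ≤ |a n| * t ^ n * t ^ x := fun n => by
    filter_upwards [hQ] with θ hθ
    have ht : 0 ≤ t := (abs_nonneg θ).trans hθ
    rw [Real.norm_eq_abs, abs_mul, abs_pow, pow_add, mul_assoc]
    gcongr
  have hint : ∀ n, Integrable (fun θ : ℝ => a n * θ ^ (n + x)) Q := fun n =>
    Integrable.of_bound (by fun_prop) _ (hbound n)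
  have hsum : Summable fun n => ∫ θ, ‖a n * θ ^ (n + x)‖ ∂Q := by
    refine (ha.mul_right (t ^ x * Q.real univ)).of_norm_bounded fun n => ?_
    rw [Real.norm_of_nonneg (integral_nonneg fun θ => norm_nonneg _), ← mul_assoc]
    refine (le_abs_self _).trans ?_
    simpa using norm_integral_le_of_norm_le_const (f := fun θ => ‖a n * θ ^ (n + x)‖)
      (by simpa only [norm_norm] using hbound n)
  have hfactor : ∀ θ : ℝ, ∑' n, a n * θ ^ (n + x) = (∑' n, a n * θ ^ n) * θ ^ x := fun θ => by
    rw [← tsum_mul_right]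
    exact tsum_congr fun n => by ring
  simpa only [integral_const_mul, hfactor] using
    hasSum_integral_of_summable_integral_norm hint hsum

theorem hasSum_mixPMF {w : ℕ → ℝ} (hw : ∀ x, 0 < w x) {R r K t : ℝ}
    (hR : Summable fun x => w x * R ^ x) (htR : t < R) (ht0 : 0 ≤ t) (htr : t < r)
    (hK : ∀ n, |iteratedDeriv n (gfun w) 0 / n !| * r ^ n ≤ K) {Q : Measure ℝ}
    [IsFiniteMeasure Q] (hQ : ∀ᵐ θ ∂Q, θ ∈ Icc 0 t) (x : ℕ) :
    HasSum (fun n => w x * (iteratedDeriv n (gfun w) 0 / n !) * ∫ θ, θ ^ (n + x) ∂Q)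
      (mixPMF w Q x) := by
  have hg := gfun_eqOn_tsum_taylor hw hR htR htr hK
  have habs : ∀ᵐ θ ∂Q, |θ| ≤ t := by
    filter_upwards [hQ] with θ hθ using (abs_of_nonneg hθ.1).trans_le hθ.2
  have hmix : mixPMF w Q x =
      w x * ∫ θ, (∑' n, iteratedDeriv n (gfun w) 0 / n ! * θ ^ n) * θ ^ x ∂Q := by
    rw [mixPMF, ← integral_const_mul]
    refine integral_congr_ae ?_
    filter_upwards [hQ] with θ hθ
    rw [ffun, hg hθ]
    ring
  rw [hmix]
  simpa only [mul_assoc] using (hasSum_integral_tsum_mul_pow_mul_pow habs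
    (summable_abs_mul_pow_of_abs_mul_pow_le hK ht0 htr) x).mul_left (w x)

theorem abs_integral_pow_le {Q : Measure ℝ} [IsProbabilityMeasure Q] {t : ℝ}
    (hQ : ∀ᵐ θ ∂Q, θ ∈ Icc 0 t) (j : ℕ) : |∫ θ, θ ^ j ∂Q| ≤ t ^ j := by
  simpa using norm_integral_le_of_norm_le_const (μ := Q) (f := fun θ : ℝ => θ ^ j) <| by
    filter_upwards [hQ] with θ hθ
    rw [Real.norm_eq_abs, abs_pow, abs_of_nonneg hθ.1]
    exact pow_le_pow_left₀ hθ.1 hθ.2 j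

theorem abs_integral_pow_sub_integral_pow_le {Q₁ Q₂ : Measure ℝ} [IsProbabilityMeasure Q₁]
    [IsProbabilityMeasure Q₂] {t : ℝ} (h₁ : ∀ᵐ θ ∂Q₁, θ ∈ Icc 0 t) (h₂ : ∀ᵐ θ ∂Q₂, θ ∈ Icc 0 t)
    (j : ℕ) : |∫ θ, θ ^ j ∂Q₁ - ∫ θ, θ ^ j ∂Q₂| ≤ 2 * t ^ j := by
  linarith [abs_sub (∫ θ, θ ^ j ∂Q₁) (∫ θ, θ ^ j ∂Q₂), abs_integral_pow_le h₁ j,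
    abs_integral_pow_le h₂ j]

theorem abs_mul_mul_le_of_eq_zero_of_le {a b d θs C C' : ℝ} {x m k : ℕ} (hθs : 0 < θs)
    (hC : 0 ≤ C) (hC' : 0 ≤ C') (ha0 : 0 ≤ a) (ha : a * θs ^ x ≤ C)
    (hb : |b| * θs ^ m ≤ C' * (C + 1) ^ m) (hd : |d| ≤ 2 * (θs / (C + 3)) ^ (m + x))
    (hdk : m + x ≤ k → d = 0) :
    |a * b * d| ≤
      2 * C * C' * ((C + 2) / (C + 3)) ^ k * (1 / (C + 2)) ^ x * ((C + 1) / (C + 2)) ^ m := by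
  rcases le_or_gt (m + x) k with hk | hk
  · rw [hdk hk, mul_zero, abs_zero]
    positivity
  have hρ : ((C + 2) / (C + 3)) ^ (m + x) ≤ ((C + 2) / (C + 3)) ^ k :=
    pow_le_pow_of_le_one (by positivity) (by rw [div_le_one (by linarith)]; linarith) hk.le
  have hd' : |d| / θs ^ (m + x) ≤ 2 / (C + 3) ^ (m + x) := by
    rw [div_le_iff₀ (by positivity), div_mul_eq_mul_div, le_div_iff₀ (by positivity)]
    calc |d| * (C + 3) ^ (m + x) ≤ 2 * (θs / (C + 3)) ^ (m + x) * (C + 3) ^ (m + x) := by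
          gcongr
      _ = 2 * θs ^ (m + x) := by
          rw [div_pow]
          field_simp
  calc |a * b * d| = (a * θs ^ x) * (|b| * θs ^ m) * (|d| / θs ^ (m + x)) := by
        rw [abs_mul, abs_mul, abs_of_nonneg ha0, pow_add]
        field_simp
    _ ≤ C * (C' * (C + 1) ^ m) * (2 / (C + 3) ^ (m + x)) :=
        mul_le_mul (mul_le_mul ha hb (by positivity) hC) hd' (by positivity) (by positivity)
    _ = 2 * C * C' * ((C + 2) / (C + 3)) ^ (m + x) * (1 / (C + 2)) ^ x
          * ((C + 1) / (C + 2)) ^ m := by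
        rw [div_pow, div_pow, div_pow, one_pow, pow_add (C + 2)]
        field_simp
    _ ≤ _ := by gcongr

theorem tsum_abs_tsum_le_of_abs_le {u : ℕ → ℕ → ℝ} {B p q : ℝ} (hp0 : 0 ≤ p) (hp1 : p < 1)
    (hq0 : 0 ≤ q) (hq1 : q < 1) (hu : ∀ x m, |u x m| ≤ B * p ^ x * q ^ m) :
    ∑' x, |∑' m, u x m| ≤ B / ((1 - p) * (1 - q)) := by
  have hrow : ∀ x, |∑' m, u x m| ≤ B / (1 - q) * p ^ x := fun x => by
    have hgeo : HasSum (fun m => B * p ^ x * q ^ m) (B * p ^ x * (1 - q)⁻¹) :=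
      (hasSum_geometric_of_lt_one hq0 hq1).mul_left _
    have hsum : Summable fun m => ‖u x m‖ := hgeo.summable.of_nonneg_of_le
      (fun m => norm_nonneg _) (hu x)
    calc |∑' m, u x m| ≤ ∑' m, ‖u x m‖ := norm_tsum_le_tsum_norm hsum
      _ ≤ B * p ^ x * (1 - q)⁻¹ := hasSum_le (hu x) hsum.hasSum hgeo
      _ = B / (1 - q) * p ^ x := by ring
  have hgeo : HasSum (fun x => B / (1 - q) * p ^ x) (B / (1 - q) * (1 - p)⁻¹) :=
    (hasSum_geometric_of_lt_one hp0 hp1).mul_left _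
  calc ∑' x, |∑' m, u x m|
      ≤ B / (1 - q) * (1 - p)⁻¹ :=
        hasSum_le hrow (hgeo.summable.of_nonneg_of_le (fun x => abs_nonneg _) hrow).hasSum hgeo
    _ = B / ((1 - p) * (1 - q)) := by field_simp

theorem half_mul_div_one_sub_mul_one_sub_le {C C' ρ : ℝ} (hC : 0 < C) (hC' : 0 ≤ C')
    (hρ : 0 ≤ ρ) :
    1 / 2 * (2 * C * C' * ρ / ((1 - 1 / (C + 2)) * (1 - (C + 1) / (C + 2)))) ≤
      2 * (C + 3) ^ 2 * C' * ρ := by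
  have hprod : (1 - 1 / (C + 2)) * (1 - (C + 1) / (C + 2)) = (C + 1) / (C + 2) ^ 2 := by
    field_simp
    ring
  calc 1 / 2 * (2 * C * C' * ρ / ((1 - 1 / (C + 2)) * (1 - (C + 1) / (C + 2))))
      = C * (C + 2) ^ 2 / (C + 1) * (C' * ρ) := by
        rw [hprod]
        field_simp
    _ ≤ 2 * (C + 3) ^ 2 * (C' * ρ) := by
        gcongr
        rw [div_le_iff₀ (by positivity)]
        nlinarith
    _ = 2 * (C + 3) ^ 2 * C' * ρ := by ring

theorem integral_pow_sub_integral_pow_eq_zero {Q₁ Q₂ : Measure ℝ} [IsProbabilityMeasure Q₁]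
    [IsProbabilityMeasure Q₂] {k : ℕ}
    (hmom : ∀ j : ℕ, 1 ≤ j → j ≤ k → ∫ θ, θ ^ j ∂Q₁ = ∫ θ, θ ^ j ∂Q₂) {j : ℕ} (hj : j ≤ k) :
    ∫ θ, θ ^ j ∂Q₁ - ∫ θ, θ ^ j ∂Q₂ = 0 := by
  rcases j.eq_zero_or_pos with rfl | hj0
  · simp
  · exact sub_eq_zero.2 (hmom j hj0 hj)

/-- total variation bound under moment matching, from the
proof of Theorem 1.  Given constants `C, C' > 0` with `w(x) θs^x ≤ C` and
`|g^{(m)}(0) θs^m / m!| ≤ C' (C+1)^m`, any two mixing distributions supported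
on `[0, θs/(C+3)]` whose first `k` moments agree satisfy
`TV(h_{Q₁}, h_{Q₂}) ≤ 2 (C+3)² C' ((C+2)/(C+3))^k`. -/
theorem stmt_16 (θs : ℝ) (hθs : 0 < θs)
    (w : ℕ → ℝ) (hw : ∀ x, 0 < w x)
    (hR : ∃ R, θs < R ∧ Summable fun x : ℕ => w x * R ^ x)
    (C C' : ℝ) (hC : 0 < C) (hC' : 0 < C')
    (hwb : ∀ x : ℕ, w x * θs ^ x ≤ C)
    (hgb : ∀ m : ℕ,
      |iteratedDeriv m (gfun w) 0 * θs ^ m / (Nat.factorial m)| ≤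
        C' * (C + 1) ^ m)
    (Q₁ Q₂ : Measure ℝ)
    (h₁ : IsProbabilityMeasure Q₁) (h₂ : IsProbabilityMeasure Q₂)
    (hs₁ : Q₁ (Set.Icc 0 (θs / (C + 3)))ᶜ = 0)
    (hs₂ : Q₂ (Set.Icc 0 (θs / (C + 3)))ᶜ = 0)
    (k : ℕ)
    (hmom : ∀ j : ℕ, 1 ≤ j → j ≤ k → (∫ θ, θ ^ j ∂Q₁) = ∫ θ, θ ^ j ∂Q₂) :
    (1 / 2) * ∑' x : ℕ, |mixPMF w Q₁ x - mixPMF w Q₂ x| ≤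
      2 * (C + 3) ^ 2 * C' * ((C + 2) / (C + 3)) ^ k := by
  obtain ⟨R, hθsR, hR⟩ := hR
  set b : ℕ → ℝ := fun n => iteratedDeriv n (gfun w) 0 / (n ! : ℝ)
  set Δ : ℕ → ℝ := fun j => ∫ θ, θ ^ j ∂Q₁ - ∫ θ, θ ^ j ∂Q₂
  have hb : ∀ n, |b n| * θs ^ n ≤ C' * (C + 1) ^ n := fun n => by
    simpa [b, abs_div, abs_mul, abs_of_pos hθs, div_mul_eq_mul_div] using hgb n
  have hbr : ∀ n, |b n| * (θs / (C + 1)) ^ n ≤ C' := fun n => by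
    rw [div_pow, ← mul_div_assoc, div_le_iff₀ (by positivity)]
    exact hb n
  have hdiff : ∀ x, HasSum (fun n => w x * b n * Δ (n + x)) (mixPMF w Q₁ x - mixPMF w Q₂ x) := by
    have htR : θs / (C + 3) < R := (div_lt_self hθs (by linarith)).trans hθsR
    have htr : θs / (C + 3) < θs / (C + 1) :=
      div_lt_div_of_pos_left hθs (by linarith) (by linarith)
    intro x
    simpa only [Δ, mul_sub] using (hasSum_mixPMF hw hR htR (by positivity) htr hbr hs₁ x).sub
      (hasSum_mixPMF hw hR htR (by positivity) htr hbr hs₂ x)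
  have hterm : ∀ x n, |w x * b n * Δ (n + x)| ≤
      2 * C * C' * ((C + 2) / (C + 3)) ^ k * (1 / (C + 2)) ^ x * ((C + 1) / (C + 2)) ^ n :=
    fun x n => abs_mul_mul_le_of_eq_zero_of_le hθs hC.le hC'.le (hw x).le (hwb x) (hb n)
      (abs_integral_pow_sub_integral_pow_le hs₁ hs₂ _)
      (integral_pow_sub_integral_pow_eq_zero hmom)
  calc 1 / 2 * ∑' x, |mixPMF w Q₁ x - mixPMF w Q₂ x|
      = 1 / 2 * ∑' x, |∑' n, w x * b n * Δ (n + x)| := by simp_rw [(hdiff _).tsum_eq]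
    _ ≤ 1 / 2 * (2 * C * C' * ((C + 2) / (C + 3)) ^ k
          / ((1 - 1 / (C + 2)) * (1 - (C + 1) / (C + 2)))) := by
        gcongr
        exact tsum_abs_tsum_le_of_abs_le (by positivity) ((div_lt_one (by linarith)).2 (by linarith))
          (by positivity) ((div_lt_one (by linarith)).2 (by linarith)) hterm
    _ ≤ 2 * (C + 3) ^ 2 * C' * ((C + 2) / (C + 3)) ^ k :=
        half_mul_div_one_sub_mul_one_sub_le hC hC'.le (by positivity)
end
end
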